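/- arXiv:1904.12169 — 3 statements merged into one kernel-verified Lean document; each statement's English description precedes it below -/
import Mathlib

section
/- Let ñ : ℝ → ℝ be a smooth solution of the ODE ñ' = (ñ − n₋)(ñ − n₊)/σ with n₊ < ñ < n₋ everywhere, ñ(0) = (n₋+n₊)/2, where n₋ > n₊ > 0 and σ > 0. Then ñ' < 0 everywhere, and for ξ ≤ 0 one has ε/2 · e^{−ε|ξ|/σ} ≤ n₋ − ñ(ξ) ≤ ε/2 · e^{−ε|ξ|/(2σ)}, while for ξ ≥ 0 one has ε/2 · e^{−εξ/σ} ≤ ñ(ξ) − n₊ ≤ ε/2 · e^{−εξ/(2σ)}, where ε = n₋ − n₊. -/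
theorem traveling_wave_exponential_bounds (nm np σ ε : ℝ) (nt : ℝ → ℝ)
    (h1 : np < nm) (h2 : 0 < np) (hσ : 0 < σ) (hε : ε = nm - np)
    (hsm : ContDiff ℝ (⊤ : ℕ∞) nt)
    (hode : ∀ ξ : ℝ, deriv nt ξ = (nt ξ - nm) * (nt ξ - np) / σ)
    (hrange : ∀ ξ : ℝ, np < nt ξ ∧ nt ξ < nm)
    (h0 : nt 0 = (nm + np) / 2) :
    (∀ ξ : ℝ, deriv nt ξ < 0) ∧
    (∀ ξ : ℝ, ξ ≤ 0 →
      ε / 2 * Real.exp (-(ε * |ξ|) / σ) ≤ nm - nt ξ ∧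
      nm - nt ξ ≤ ε / 2 * Real.exp (-(ε * |ξ|) / (2 * σ))) ∧
    (∀ ξ : ℝ, 0 ≤ ξ →
      ε / 2 * Real.exp (-(ε * ξ) / σ) ≤ nt ξ - np ∧
      nt ξ - np ≤ ε / 2 * Real.exp (-(ε * ξ) / (2 * σ))) := by
  have hε0 : 0 < ε := by rw [hε]; linarith
  have hd : Differentiable ℝ nt := hsm.differentiable (by simp)
  have hderiv_neg : ∀ ξ : ℝ, deriv nt ξ < 0 := by
    intro ξ
    rw [hode ξ]
    have h := hrange ξ
    exact div_neg_of_neg_of_pos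
      (mul_neg_of_neg_of_pos (by linarith [h.2]) (by linarith [h.1])) hσ
  have hanti : StrictAnti nt := strictAnti_of_deriv_neg hderiv_neg
  -- derivative helpers
  have hkey : ∀ (c a ξ : ℝ), HasDerivAt (fun x => (nt x - c) * Real.exp (a * x))
      (deriv nt ξ * Real.exp (a * ξ) + (nt ξ - c) * (Real.exp (a * ξ) * a)) ξ := by
    intro c a ξ
    have he : HasDerivAt (fun x : ℝ => Real.exp (a * x)) (Real.exp (a * ξ) * a) ξ := by
      simpa using (((hasDerivAt_id ξ).const_mul a).exp)
    exact (((hd ξ).hasDerivAt).sub_const c).mul he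
  have hkey2 : ∀ (a ξ : ℝ), HasDerivAt (fun x => (nm - nt x) * Real.exp (a * x))
      ((0 - deriv nt ξ) * Real.exp (a * ξ) + (nm - nt ξ) * (Real.exp (a * ξ) * a)) ξ := by
    intro a ξ
    have he : HasDerivAt (fun x : ℝ => Real.exp (a * x)) (Real.exp (a * ξ) * a) ξ := by
      simpa using (((hasDerivAt_id ξ).const_mul a).exp)
    exact ((hasDerivAt_const ξ nm).sub ((hd ξ).hasDerivAt)).mul he
  have hv_le : ∀ ξ : ℝ, ξ ≤ 0 → nm - nt ξ ≤ ε / 2 := by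
    intro ξ hξ
    have h := hanti.antitone hξ
    rw [hε]; rw [h0] at h; linarith
  have hw_le : ∀ ξ : ℝ, 0 ≤ ξ → nt ξ - np ≤ ε / 2 := by
    intro ξ hξ
    have h := hanti.antitone hξ
    rw [hε]; rw [h0] at h; linarith
  refine ⟨hderiv_neg, ?_, ?_⟩
  · -- ξ ≤ 0 case, v = nm - nt
    intro ξ hξ
    rw [abs_of_nonpos hξ]
    constructor
    · -- lower bound : H1 = v * exp(-(ε/σ) x) is antitone
      have hmono : Antitone (fun x => (nm - nt x) * Real.exp (-(ε/σ) * x)) := by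
        apply antitone_of_deriv_nonpos
        · exact fun x => ((hkey2 (-(ε/σ)) x).differentiableAt)
        · intro x
          rw [(hkey2 (-(ε/σ)) x).deriv, hode x]
          have rng := hrange x
          have he := Real.exp_pos (-(ε/σ) * x)
          have heq : (0 - (nt x - nm) * (nt x - np) / σ) * Real.exp (-(ε/σ) * x) +
              (nm - nt x) * (Real.exp (-(ε/σ) * x) * (-(ε/σ))) =
              Real.exp (-(ε/σ) * x) * (nm - nt x) / σ * (nt x - nm) := by
            rw [hε]; field_simp; ring
          rw [heq]
          have hv : 0 < nm - nt x := by linarith [rng.2]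
          exact mul_nonpos_of_nonneg_of_nonpos (by positivity) (by linarith [rng.2])
      have h10 : (nm - nt 0) * Real.exp (-(ε/σ) * 0) = ε / 2 := by
        rw [mul_zero, Real.exp_zero, mul_one, h0, hε]; ring
      have hm := hmono hξ
      simp only [] at hm; rw [h10] at hm
      have harg2 : -(ε/σ) * ξ = -(ε * ξ / σ) := by ring
      rw [harg2, Real.exp_neg, ← div_eq_mul_inv, le_div_iff₀ (Real.exp_pos _)] at hm
      have harg : -(ε * -ξ) / σ = ε * ξ / σ := by ring
      rw [harg]
      exact hm
    · -- upper bound : H2 = v * exp(-(ε/(2σ)) x) is monotone on Iic 0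
      have hmono : MonotoneOn (fun x => (nm - nt x) * Real.exp (-(ε/(2*σ)) * x)) (Set.Iic 0) := by
        apply monotoneOn_of_deriv_nonneg (convex_Iic 0)
        · exact (Differentiable.continuous
            (fun x => ((hkey2 (-(ε/(2*σ))) x).differentiableAt))).continuousOn
        · exact fun x _ => ((hkey2 (-(ε/(2*σ))) x).differentiableAt).differentiableWithinAt
        · intro x hx
          rw [interior_Iic] at hx
          rw [(hkey2 (-(ε/(2*σ))) x).deriv, hode x]
          have rng := hrange x
          have he := Real.exp_pos (-(ε/(2*σ)) * x)
          have hvle := hv_le x (le_of_lt hx)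
          have heq : (0 - (nt x - nm) * (nt x - np) / σ) * Real.exp (-(ε/(2*σ)) * x) +
              (nm - nt x) * (Real.exp (-(ε/(2*σ)) * x) * (-(ε/(2*σ)))) =
              Real.exp (-(ε/(2*σ)) * x) * (nm - nt x) / σ * ((nt x - np) - ε/2) := by
            rw [hε]; field_simp; ring
          rw [heq]
          have hB : 0 ≤ (nt x - np) - ε/2 := by rw [hε] at hvle ⊢; linarith
          have hv : 0 < nm - nt x := by linarith [rng.2]
          exact mul_nonneg (by positivity) hB
      have h20 : (nm - nt 0) * Real.exp (-(ε/(2*σ)) * 0) = ε / 2 := by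
        rw [mul_zero, Real.exp_zero, mul_one, h0, hε]; ring
      have hm := hmono hξ (Set.self_mem_Iic) hξ
      simp only [] at hm; rw [h20] at hm
      have harg2 : -(ε/(2*σ)) * ξ = -(ε * ξ / (2*σ)) := by ring
      rw [harg2, Real.exp_neg, ← div_eq_mul_inv, div_le_iff₀ (Real.exp_pos _)] at hm
      have harg : -(ε * -ξ) / (2*σ) = ε * ξ / (2*σ) := by ring
      rw [harg]
      exact hm
  · -- ξ ≥ 0 case, w = nt - np
    intro ξ hξ
    constructor
    · -- lower bound : G1 = w * exp((ε/σ) x) is monotone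
      have hmono : Monotone (fun x => (nt x - np) * Real.exp ((ε/σ) * x)) := by
        apply monotone_of_deriv_nonneg
        · exact fun x => ((hkey np (ε/σ) x).differentiableAt)
        · intro x
          rw [(hkey np (ε/σ) x).deriv, hode x]
          have rng := hrange x
          have he := Real.exp_pos ((ε/σ) * x)
          have heq : (nt x - nm) * (nt x - np) / σ * Real.exp ((ε/σ) * x) +
              (nt x - np) * (Real.exp ((ε/σ) * x) * (ε/σ)) =
              Real.exp ((ε/σ) * x) * (nt x - np) / σ * (nt x - np) := by
            rw [hε]; field_simp; ring
          rw [heq]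
          have hB : 0 < nt x - np := by linarith [rng.1]
          exact mul_nonneg (by positivity) hB.le
      have h10 : (nt 0 - np) * Real.exp ((ε/σ) * 0) = ε / 2 := by
        rw [mul_zero, Real.exp_zero, mul_one, h0, hε]; ring
      have hm := hmono hξ
      simp only [] at hm; rw [h10] at hm
      have harg2 : (ε/σ) * ξ = ε * ξ / σ := by ring
      rw [harg2] at hm
      have harg : -(ε * ξ) / σ = -(ε * ξ / σ) := by ring
      rw [harg, Real.exp_neg, ← div_eq_mul_inv, div_le_iff₀ (Real.exp_pos _)]
      exact hm
    · -- upper bound : G2 = w * exp((ε/(2σ)) x) is antitone on Ici 0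
      have hmono : AntitoneOn (fun x => (nt x - np) * Real.exp ((ε/(2*σ)) * x)) (Set.Ici 0) := by
        apply antitoneOn_of_deriv_nonpos (convex_Ici 0)
        · exact (Differentiable.continuous
            (fun x => ((hkey np (ε/(2*σ)) x).differentiableAt))).continuousOn
        · exact fun x _ => ((hkey np (ε/(2*σ)) x).differentiableAt).differentiableWithinAt
        · intro x hx
          rw [interior_Ici] at hx
          rw [(hkey np (ε/(2*σ)) x).deriv, hode x]
          have rng := hrange x
          have he := Real.exp_pos ((ε/(2*σ)) * x)
          have hwle := hw_le x (le_of_lt hx)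
          have heq : (nt x - nm) * (nt x - np) / σ * Real.exp ((ε/(2*σ)) * x) +
              (nt x - np) * (Real.exp ((ε/(2*σ)) * x) * (ε/(2*σ))) =
              Real.exp ((ε/(2*σ)) * x) * (nt x - np) / σ * ((nt x - np) - ε/2) := by
            rw [hε]; field_simp; ring
          rw [heq]
          have hB : 0 < nt x - np := by linarith [rng.1]
          exact mul_nonpos_of_nonneg_of_nonpos (by positivity) (by linarith)
      have h20 : (nt 0 - np) * Real.exp ((ε/(2*σ)) * 0) = ε / 2 := by
        rw [mul_zero, Real.exp_zero, mul_one, h0, hε]; ring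
      have hm := hmono (Set.self_mem_Ici) hξ hξ
      simp only [] at hm; rw [h20] at hm
      have harg2 : (ε/(2*σ)) * ξ = ε * ξ / (2*σ) := by ring
      rw [harg2] at hm
      have harg : -(ε * ξ) / (2*σ) = -(ε * ξ / (2*σ)) := by ring
      rw [harg, Real.exp_neg, ← div_eq_mul_inv, le_div_iff₀ (Real.exp_pos _)]
      exact hm
end

section
/- Under the hypotheses of the previous traveling-wave ODE (ñ' = (ñ−n₋)(ñ−n₊)/σ, n₊ < ñ < n₋, ñ(0) = (n₋+n₊)/2, ε = n₋−n₊), one has −(ε²/(2σ))·e^{−ε|ξ|/(2σ)} ≤ ñ'(ξ) ≤ −(ε²/(4σ))·e^{−ε|ξ|/σ} for all ξ ∈ ℝ, and moreover |ñ''(ξ)| ≤ (2ε/σ)|ñ'(ξ)|. -/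
theorem traveling_wave_derivative_bounds (nm np σ ε : ℝ) (nt : ℝ → ℝ)
    (h1 : np < nm) (h2 : 0 < np) (hσ : 0 < σ) (hε : ε = nm - np)
    (hsm : ContDiff ℝ (⊤ : ℕ∞) nt)
    (hode : ∀ ξ : ℝ, deriv nt ξ = (nt ξ - nm) * (nt ξ - np) / σ)
    (hrange : ∀ ξ : ℝ, np < nt ξ ∧ nt ξ < nm)
    (h0 : nt 0 = (nm + np) / 2) :
    (∀ ξ : ℝ,
      -(ε ^ 2 / (2 * σ)) * Real.exp (-(ε * |ξ|) / (2 * σ)) ≤ deriv nt ξ ∧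
      deriv nt ξ ≤ -(ε ^ 2 / (4 * σ)) * Real.exp (-(ε * |ξ|) / σ)) ∧
    (∀ ξ : ℝ, |deriv (deriv nt) ξ| ≤ (2 * ε / σ) * |deriv nt ξ|) := by
  have hεpos : 0 < ε := by rw [hε]; linarith
  have hσ' : σ ≠ 0 := ne_of_gt hσ
  have hdiff : Differentiable ℝ nt := hsm.differentiable (by simp)
  have hden : ∀ ξ, 0 < nm - nt ξ := fun ξ => by linarith [(hrange ξ).2]
  have hnum : ∀ ξ, 0 < nt ξ - np := fun ξ => by linarith [(hrange ξ).1]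
  set v : ℝ → ℝ := fun ξ => (nt ξ - np) / (nm - nt ξ) with hv
  have hvderiv : ∀ ξ, HasDerivAt v (-(ε / σ) * v ξ) ξ := by
    intro ξ
    have hnt : HasDerivAt nt (deriv nt ξ) ξ := (hdiff ξ).hasDerivAt
    have h1' : HasDerivAt (fun x => nt x - np) (deriv nt ξ) ξ := hnt.sub_const np
    have h2' : HasDerivAt (fun x => nm - nt x) (-(deriv nt ξ)) ξ := hnt.const_sub nm
    have h3' := h1'.div h2' (ne_of_gt (hden ξ))
    refine h3'.congr_deriv ?_
    have hb' : nm - nt ξ ≠ 0 := (hden ξ).ne'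
    simp only [hv]
    rw [hode ξ, hε]
    field_simp
    ring
  -- v is an exponential
  have hveq : ∀ ξ, v ξ = Real.exp (-(ε * ξ) / σ) := by
    have hgd : ∀ ξ, HasDerivAt (fun x => v x * Real.exp (ε * x / σ)) 0 ξ := by
      intro ξ
      have hlin : HasDerivAt (fun x : ℝ => ε * x / σ) (ε / σ) ξ := by
        simpa using ((hasDerivAt_id ξ).const_mul ε).div_const σ
      have hexp := hlin.exp
      have := (hvderiv ξ).mul hexp
      refine this.congr_deriv ?_
      ring
    have hconst : ∀ ξ, v ξ * Real.exp (ε * ξ / σ) = v 0 * Real.exp (ε * 0 / σ) := by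
      intro ξ
      exact is_const_of_deriv_eq_zero (fun x => (hgd x).differentiableAt)
        (fun x => (hgd x).deriv) ξ 0
    have hv0 : v 0 = 1 := by
      simp only [hv]
      rw [h0, div_eq_one_iff_eq (by intro hcon; linarith)]
      ring
    intro ξ
    have h := hconst ξ
    rw [hv0] at h
    simp at h
    have : v ξ = (Real.exp (ε * ξ / σ))⁻¹ := eq_inv_of_mul_eq_one_left h
    rw [this, ← Real.exp_neg]
    congr 1
    ring
  -- explicit formula for deriv nt
  have hd : ∀ ξ, deriv nt ξ = -(ε ^ 2 * Real.exp (-(ε * ξ) / σ)) /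
      (σ * (1 + Real.exp (-(ε * ξ) / σ)) ^ 2) := by
    intro ξ
    set w := Real.exp (-(ε * ξ) / σ) with hwdef
    have hwpos : 0 < w := Real.exp_pos _
    have hveq' := hveq ξ
    have hw : nt ξ - np = w * (nm - nt ξ) := by
      have hwv : w = v ξ := by rw [hwdef, hveq']
      rw [hwv]
      simp only [hv]
      exact (div_mul_cancel₀ _ (hden ξ).ne').symm
    have hu : nt ξ = (np + w * nm) / (1 + w) := by
      rw [eq_div_iff (by positivity)]
      nlinarith [hw]
    rw [hode ξ, hu, hε]
    have h1w : (0:ℝ) < 1 + w := by positivity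
    field_simp
    ring
  constructor
  · intro ξ
    set w := Real.exp (-(ε * ξ) / σ) with hwdef
    set s := Real.exp (-(ε * |ξ|) / (2 * σ)) with hsdef
    have hwpos : 0 < w := Real.exp_pos _
    have hspos : 0 < s := Real.exp_pos _
    have hsle : s ≤ 1 := by
      rw [hsdef]
      apply Real.exp_le_one_iff.mpr
      have : 0 ≤ ε * |ξ| := mul_nonneg hεpos.le (abs_nonneg ξ)
      apply div_nonpos_of_nonpos_of_nonneg <;> nlinarith
    have hE1 : Real.exp (-(ε * |ξ|) / σ) = s ^ 2 := by
      rw [hsdef, sq, ← Real.exp_add]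
      congr 1; ring
    have key : w * (1 + s ^ 2) ^ 2 = s ^ 2 * (1 + w) ^ 2 := by
      rcases abs_cases ξ with ⟨heq, hsign⟩ | ⟨heq, hsign⟩
      · have hws : s ^ 2 = w := by
          rw [hsdef, hwdef, sq, ← Real.exp_add, heq]
          congr 1; ring
        rw [hws]
      · have hrel : w * s ^ 2 = 1 := by
          rw [hsdef, hwdef, sq, ← Real.exp_add, ← Real.exp_add, heq]
          rw [show -(ε * ξ) / σ + (-(ε * -ξ) / (2 * σ) + -(ε * -ξ) / (2 * σ)) = 0 by ring]
          exact Real.exp_zero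
        linear_combination (s ^ 2 - w) * hrel
    have hq : deriv nt ξ = -(ε ^ 2 * s ^ 2) / (σ * (1 + s ^ 2) ^ 2) := by
      rw [hd ξ, ← hwdef, div_eq_div_iff (by positivity) (by positivity)]
      linear_combination -(σ * ε ^ 2) * key
    have key1 : 2 * s ≤ (1 + s ^ 2) ^ 2 := by nlinarith [sq_nonneg (1 - s), hspos.le]
    have hs2 : s ^ 2 ≤ 1 := by nlinarith [hspos.le]
    have key2 : (1 + s ^ 2) ^ 2 ≤ 4 := by
      nlinarith [hs2, sq_nonneg s, mul_le_mul_of_nonneg_left hs2 (sq_nonneg s)]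
    constructor
    · rw [hq, show -(ε ^ 2 / (2 * σ)) * s = -(ε ^ 2 * s / (2 * σ)) by ring,
        neg_div, neg_le_neg_iff, div_le_div_iff₀ (by positivity) (by positivity)]
      nlinarith [mul_le_mul_of_nonneg_left key1 (show (0:ℝ) ≤ ε ^ 2 * σ * s by positivity)]
    · rw [hq, hE1, show -(ε ^ 2 / (4 * σ)) * s ^ 2 = -(ε ^ 2 * s ^ 2 / (4 * σ)) by ring,
        neg_div, neg_le_neg_iff, div_le_div_iff₀ (by positivity) (by positivity)]
      nlinarith [mul_le_mul_of_nonneg_left key2 (show (0:ℝ) ≤ ε ^ 2 * s ^ 2 * σ by positivity)]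
  · intro ξ
    set d := deriv nt ξ with hddef
    have hnt : HasDerivAt nt d ξ := (hdiff ξ).hasDerivAt
    have h' := ((hnt.sub_const nm).mul (hnt.sub_const np)).div_const σ
    have hdd : deriv (deriv nt) ξ = d * (2 * nt ξ - nm - np) / σ := by
      have hfun : deriv nt = fun x => (nt x - nm) * (nt x - np) / σ := funext hode
      rw [hfun]; erw [h'.deriv]
      ring
    have hc : |2 * nt ξ - nm - np| ≤ ε := by
      rw [abs_le]
      constructor <;> [nlinarith [(hrange ξ).1]; nlinarith [(hrange ξ).2]]
    rw [hdd, abs_div, abs_mul, abs_of_pos hσ,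
      show 2 * ε / σ * |d| = 2 * ε * |d| / σ by ring]
    rw [div_le_div_iff₀ hσ hσ]
    have h1 := mul_le_mul_of_nonneg_left hc (abs_nonneg d)
    nlinarith [mul_nonneg (mul_nonneg hεpos.le (abs_nonneg d)) hσ.le,
      mul_le_mul_of_nonneg_right h1 hσ.le]
end

section
/- For every δ₁ ∈ (0,1/2) there exists L = L(δ₁) > 0 such that: for all y > 0 and y₀ > 0 with |y₀ − 1| ≤ min{δ₁/2, (√(1+δ₁)−1)(√(1−δ₁/2)+1)/2} and |y − 1| ≥ δ₁, one has |y − 1| ≤ L·|√y − √y₀|². -/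
/-!
Write `t = √y`, `u = √y₀`, `s = √(1 + δ₁)`, `w = √(1 - δ₁/2)`, `v = √(1 - δ₁)`. The hypothesis on
`y₀` gives `w ≤ u ≤ (1 + s)/2`. If `y ≥ 1 + δ₁` then `t ≥ s`, so `t - u ≥ t (s - 1)/(2s)` and
`y - 1 ≤ t²` is controlled by `(t - u)²`. If `y ≤ 1 - δ₁` then `t ≤ v`, so `u - t ≥ w - v > 0`,
while `1 - y ≤ 1`.
-/

lemma sub_one_le_of_sq_sub_one_le_mul {u w c : ℝ} (hu : 0 ≤ u) (hwu : w ≤ u) (hc : 0 ≤ c)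
    (h : u ^ 2 - 1 ≤ c * (w + 1)) : u - 1 ≤ c := by
  have hmul : (u - 1) * (u + 1) ≤ c * (u + 1) := by nlinarith [mul_le_mul_of_nonneg_left hwu hc]
  exact le_of_mul_le_mul_right hmul (by linarith)

lemma sq_sub_one_le_mul_sq_sub {s t u : ℝ} (hs : 1 < s) (hst : s ≤ t) (hu : u ≤ (1 + s) / 2) :
    t ^ 2 - 1 ≤ (2 * s / (s - 1)) ^ 2 * (t - u) ^ 2 := by
  have hs₀ : 0 < s - 1 := by linarith
  have hgap : t * (s - 1) / (2 * s) ≤ t - u := by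
    rw [div_le_iff₀ (by positivity)]
    nlinarith
  calc t ^ 2 - 1 ≤ (2 * s / (s - 1)) ^ 2 * (t * (s - 1) / (2 * s)) ^ 2 := by
        field_simp
        linarith
    _ ≤ (2 * s / (s - 1)) ^ 2 * (t - u) ^ 2 := by
        gcongr
        exact div_nonneg (mul_nonneg (by linarith) hs₀.le) (by linarith)

lemma one_sub_sq_le_mul_sq_sub {g t u : ℝ} (hg : 0 < g) (hgap : g ≤ u - t) :
    1 - t ^ 2 ≤ g⁻¹ ^ 2 * (t - u) ^ 2 := by
  calc 1 - t ^ 2 ≤ g⁻¹ ^ 2 * g ^ 2 := by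
        rw [← mul_pow, inv_mul_cancel₀ hg.ne']
        nlinarith
    _ ≤ g⁻¹ ^ 2 * (t - u) ^ 2 := by
        rw [← neg_sub u t, neg_sq]
        gcongr

theorem sqrt_gap_controls_distance_general (δ₁ : ℝ) (hδ₁ : 0 < δ₁) :
    ∃ L : ℝ, 0 < L ∧ ∀ y y₀ : ℝ, 0 < y → 0 < y₀ →
      |y₀ - 1| ≤ min (δ₁ / 2)
        ((Real.sqrt (1 + δ₁) - 1) * (Real.sqrt (1 - δ₁ / 2) + 1) / 2) →
      δ₁ ≤ |y - 1| →
      |y - 1| ≤ L * |Real.sqrt y - Real.sqrt y₀| ^ 2 := by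
  set s := √(1 + δ₁)
  set w := √(1 - δ₁ / 2)
  have hs : 1 < s := Real.lt_sqrt_of_sq_lt (by linarith)
  have hL : 0 < (2 * s / (s - 1)) ^ 2 := pow_pos (div_pos (by linarith) (sub_pos.2 hs)) 2
  refine ⟨max ((2 * s / (s - 1)) ^ 2) ((w - √(1 - δ₁))⁻¹ ^ 2), lt_max_of_lt_left hL, ?_⟩
  intro y y₀ hy hy₀ hy₀1 hy1
  obtain ⟨hy₀δ, hy₀s⟩ := le_min_iff.mp hy₀1
  have hwu : w ≤ √y₀ := Real.sqrt_le_sqrt (by linarith [neg_abs_le (y₀ - 1)])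
  rw [sq_abs]
  rcases le_abs.mp hy1 with hup | hlow
  · have hu : √y₀ - 1 ≤ (s - 1) / 2 :=
      sub_one_le_of_sq_sub_one_le_mul (Real.sqrt_nonneg _) hwu (by linarith) <| by
        rw [Real.sq_sqrt hy₀.le]
        linarith [le_abs_self (y₀ - 1)]
    calc |y - 1| = √y ^ 2 - 1 := by rw [Real.sq_sqrt hy.le, abs_of_nonneg (by linarith)]
      _ ≤ (2 * s / (s - 1)) ^ 2 * (√y - √y₀) ^ 2 :=
        sq_sub_one_le_mul_sq_sub hs (Real.sqrt_le_sqrt (by linarith)) (by linarith)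
      _ ≤ _ := by gcongr; exact le_max_left _ _
  · have hwv : √(1 - δ₁) < w := Real.sqrt_lt_sqrt (by linarith) (by linarith)
    have htv : √y ≤ √(1 - δ₁) := Real.sqrt_le_sqrt (by linarith)
    calc |y - 1| = 1 - √y ^ 2 := by rw [Real.sq_sqrt hy.le, abs_of_nonpos (by linarith)]; ring
      _ ≤ (w - √(1 - δ₁))⁻¹ ^ 2 * (√y - √y₀) ^ 2 :=
        one_sub_sq_le_mul_sq_sub (by linarith) (by linarith)
      _ ≤ _ := by gcongr; exact le_max_right _ _

theorem sqrt_gap_controls_distance (δ₁ : ℝ) (hδ₁ : 0 < δ₁) (hδ₁' : δ₁ < 1/2) :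
    ∃ L : ℝ, 0 < L ∧ ∀ y y₀ : ℝ, 0 < y → 0 < y₀ →
      |y₀ - 1| ≤ min (δ₁ / 2)
        ((Real.sqrt (1 + δ₁) - 1) * (Real.sqrt (1 - δ₁ / 2) + 1) / 2) →
      δ₁ ≤ |y - 1| →
      |y - 1| ≤ L * |Real.sqrt y - Real.sqrt y₀| ^ 2 :=
  sqrt_gap_controls_distance_general δ₁ hδ₁
end
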